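/- Let (X, Y, A) be jointly distributed with Y, A ∈ {0,1}, let f : X → Z be a feature map, and let H ⊆ 2^Z contain all measurable binary classifiers from Z to {0,1}. If Priv_A(H ∘ f) ≥ 1 − D_JS(D₀^Y, D₁^Y), then for every h ∈ H, Err₀(h ∘ f) + Err₁(h ∘ f) ≥ (1/2) ( d_JS(D₀^Y, D₁^Y) − √(1 − Priv_A(H ∘ f)) )², where D_a^Y is the conditional distribution of Y given A = a. -/

import Mathlib

open MeasureTheory ProbabilityTheory
open scoped ENNReal

/-!
Jensen–Shannon divergence (in bits) is bounded by total variation: after normalising a pair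
`(p, q)` to `(t, 1 - t)`, the bound `D_JS ≤ TV` is the concavity estimate
`binEntropy t ≥ (1 - |2t - 1|) log 2`. For binary `Y` the total variation between the two
conditional laws is `|Pr(Y = 1 | A = 0) - Pr(Y = 1 | A = 1)|`, and the triangle inequality
through `Pr(h ∘ f = 1 | A = a)` bounds it by `Err₀ + Err₁ + (1 - Priv_A(h ∘ f))`.
Hence `D_JS - (1 - Priv_A(H ∘ f)) ≤ Err₀ + Err₁`, and the hypothesis makes the left side at
least `(d_JS - √(1 - Priv_A(H ∘ f)))²`.
-/

/-- Kullback–Leibler divergence (base-2 logarithm) between two mass functions,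
with the usual conventions `0 log 0 = 0`. -/
noncomputable def klFun {α : Type*} (P Q : α → ℝ≥0∞) : ℝ :=
  ∑' a, (P a).toReal * Real.logb 2 ((P a).toReal / (Q a).toReal)

/-- Jensen–Shannon divergence (base-2 logarithm):
`D_JS(P, Q) = (1/2) D_KL(P ‖ M) + (1/2) D_KL(Q ‖ M)` where `M = (P + Q)/2`. -/
noncomputable def jsFun {α : Type*} (P Q : α → ℝ≥0∞) : ℝ :=
  (klFun P (fun a => (P a + Q a) / 2) + klFun Q (fun a => (P a + Q a) / 2)) / 2

/-- `privA μ A g` is the privacy of a binary classifier output `g` with respect to the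
binary sensitive attribute `A`, `1 - |Pr(g = 1 | A = 1) - Pr(g = 1 | A = 0)|`. -/
noncomputable def privA {Ω : Type*} [MeasurableSpace Ω] (μ : Measure Ω)
    (A : Ω → Bool) (g : Ω → Bool) : ℝ :=
  1 - |((ProbabilityTheory.cond μ {ω | A ω = true}) {ω | g ω = true}).toReal -
        ((ProbabilityTheory.cond μ {ω | A ω = false}) {ω | g ω = true}).toReal|

/-- Conditional error `Err_a(g) = E[|Y - g(X)| | A = a]` of a binary classifier. -/
noncomputable def errCond {Ω : Type*} [MeasurableSpace Ω] (μ : Measure Ω)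
    (Y A : Ω → Bool) (g : Ω → Bool) (a : Bool) : ℝ :=
  ∫ ω, |(if Y ω then (1:ℝ) else 0) - (if g ω then (1:ℝ) else 0)|
    ∂(ProbabilityTheory.cond μ {ω' | A ω' = a})

namespace Real

lemma one_sub_abs_mul_log_two_le_binEntropy {t : ℝ} (ht₀ : 0 ≤ t) (ht₁ : t ≤ 1) :
    (1 - |2 * t - 1|) * log 2 ≤ binEntropy t := by
  wlog ht : t ≤ 2⁻¹ generalizing t
  · have h := this (t := 1 - t) (by linarith) (by linarith) (by linarith)
    rwa [binEntropy_one_sub, show 2 * (1 - t) - 1 = -(2 * t - 1) by ring, abs_neg] at h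
  have h : (1 - 2 * t) • binEntropy 0 + (2 * t) • binEntropy 2⁻¹
      ≤ binEntropy ((1 - 2 * t) • 0 + (2 * t) • 2⁻¹) :=
    strictConcave_binEntropy.concaveOn.2 ⟨le_rfl, zero_le_one⟩ ⟨by norm_num, by norm_num⟩
      (by linarith) (by linarith) (by ring)
  rw [abs_of_nonpos (by linarith)]
  simpa [show 2 * t * 2⁻¹ = t by ring, ← mul_assoc] using h

lemma mul_logb_two_mul (x : ℝ) : x * logb 2 (2 * x) = x + x * log x / log 2 := by
  rcases eq_or_ne x 0 with rfl | hx
  · simp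
  rw [logb, log_mul two_ne_zero hx]
  field_simp

lemma mul_logb_div_add_mul_logb_div_le_abs_sub {p q : ℝ} (hp : 0 ≤ p) (hq : 0 ≤ q) :
    p * logb 2 (p / ((p + q) / 2)) + q * logb 2 (q / ((p + q) / 2)) ≤ |p - q| := by
  rcases (add_nonneg hp hq).eq_or_lt with hs | hs
  · obtain ⟨rfl, rfl⟩ : p = 0 ∧ q = 0 := ⟨by linarith, by linarith⟩
    simp
  obtain ⟨t, ht⟩ : ∃ t, t = p / (p + q) := ⟨_, rfl⟩
  have hpt : p = (p + q) * t := by rw [ht]; field_simp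
  have hqt : q = (p + q) * (1 - t) := by rw [ht]; field_simp; ring
  have hH := one_sub_abs_mul_log_two_le_binEntropy (t := t) (by rw [ht]; positivity)
    (by rw [ht]; exact div_le_one_of_le₀ (by linarith) hs.le)
  rw [binEntropy_eq_negMulLog_add_negMulLog_one_sub, negMulLog, negMulLog,
    ← le_div_iff₀ (log_pos one_lt_two)] at hH
  calc p * logb 2 (p / ((p + q) / 2)) + q * logb 2 (q / ((p + q) / 2))
      = (p + q) * (t * logb 2 (2 * t) + (1 - t) * logb 2 (2 * (1 - t))) := by
        rw [show p / ((p + q) / 2) = 2 * t by rw [ht]; field_simp,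
          show q / ((p + q) / 2) = 2 * (1 - t) by rw [ht]; field_simp; ring]
        linear_combination logb 2 (2 * t) * hpt + logb 2 (2 * (1 - t)) * hqt
    _ ≤ (p + q) * |2 * t - 1| := by
        rw [mul_logb_two_mul, mul_logb_two_mul]
        gcongr
        have : t * log t / log 2 + (1 - t) * log (1 - t) / log 2
            = -((-t * log t + -(1 - t) * log (1 - t)) / log 2) := by ring
        linarith
    _ = |p - q| := by
        rw [← abs_of_pos hs, ← abs_mul]
        congr 1
        linear_combination (-2) * hpt

end Real

lemma jsFun_le_half_sum_abs_sub {α : Type*} [Fintype α] {P Q : α → ℝ≥0∞}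
    (hP : ∀ a, P a ≠ ∞) (hQ : ∀ a, Q a ≠ ∞) :
    jsFun P Q ≤ (∑ a, |(P a).toReal - (Q a).toReal|) / 2 := by
  have hM : ∀ a, ((P a + Q a) / 2).toReal = ((P a).toReal + (Q a).toReal) / 2 := fun a => by
    rw [ENNReal.toReal_div, ENNReal.toReal_add (hP a) (hQ a), ENNReal.toReal_ofNat]
  unfold jsFun klFun
  simp only [tsum_fintype, hM, ← Finset.sum_add_distrib]
  gcongr with a
  exact Real.mul_logb_div_add_mul_logb_div_le_abs_sub ENNReal.toReal_nonneg ENNReal.toReal_nonneg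

section

variable {Ω : Type*} [MeasurableSpace Ω]

lemma jsFun_law_bool_le_abs_sub {ν₀ ν₁ : Measure Ω} [IsProbabilityMeasure ν₀]
    [IsProbabilityMeasure ν₁] {Y : Ω → Bool} (hY : Measurable Y) :
    jsFun (fun b => ν₀ {ω | Y ω = b}) (fun b => ν₁ {ω | Y ω = b})
      ≤ |ν₀.real {ω | Y ω = true} - ν₁.real {ω | Y ω = true}| := by
  refine (jsFun_le_half_sum_abs_sub (fun _ => measure_ne_top _ _)
    (fun _ => measure_ne_top _ _)).trans_eq ?_
  have hfalse : {ω | Y ω = false} = {ω | Y ω = true}ᶜ := by ext; simp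
  have hmeas : MeasurableSet {ω | Y ω = true} := hY (measurableSet_singleton true)
  simp only [Fintype.sum_bool, ← measureReal_def, hfalse, probReal_compl_eq_one_sub hmeas,
    sub_sub_sub_cancel_left, abs_sub_comm (ν₁.real _)]
  ring

lemma abs_measureReal_sub_le_integral_abs (ν : Measure Ω) [IsFiniteMeasure ν] {Y g : Ω → Bool}
    (hY : Measurable Y) (hg : Measurable g) :
    |ν.real {ω | Y ω = true} - ν.real {ω | g ω = true}|
      ≤ ∫ ω, |(if Y ω then (1:ℝ) else 0) - (if g ω then (1:ℝ) else 0)| ∂ν := by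
  have hind : ∀ Z : Ω → Bool,
      (fun ω => if Z ω then (1:ℝ) else 0) = {ω | Z ω = true}.indicator 1 := fun Z => by
    ext ω; simp [Set.indicator_apply]
  have hint : ∀ Z : Ω → Bool, Measurable Z →
      Integrable (fun ω => if Z ω then (1:ℝ) else 0) ν := fun Z hZ => by
    rw [hind]; exact (integrable_const 1).indicator (hZ (measurableSet_singleton true))
  have hprob : ∀ Z : Ω → Bool, Measurable Z →
      ν.real {ω | Z ω = true} = ∫ ω, (if Z ω then (1:ℝ) else 0) ∂ν := fun Z hZ => by
    rw [hind]; exact (integral_indicator_one (hZ (measurableSet_singleton true))).symm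
  rw [hprob Y hY, hprob g hg, ← integral_sub (hint Y hY) (hint g hg)]
  exact abs_integral_le_integral_abs

lemma privA_nonneg (μ : Measure Ω) (A g : Ω → Bool) : 0 ≤ privA μ A g :=
  sub_nonneg.2 <| abs_sub_le_of_nonneg_of_le measureReal_nonneg measureReal_le_one
    measureReal_nonneg measureReal_le_one

lemma privA_le_one (μ : Measure Ω) (A g : Ω → Bool) : privA μ A g ≤ 1 :=
  sub_le_self _ (abs_nonneg _)

lemma abs_sub_le_errCond_add_errCond_add_one_sub_privA (μ : Measure Ω) {Y A g : Ω → Bool}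
    (hY : Measurable Y) (hg : Measurable g) :
    |μ[|{ω | A ω = false}].real {ω | Y ω = true} - μ[|{ω | A ω = true}].real {ω | Y ω = true}|
      ≤ errCond μ Y A g false + errCond μ Y A g true + (1 - privA μ A g) := by
  unfold errCond privA
  simp only [sub_sub_cancel, ← measureReal_def]
  set ν₀ := μ[|{ω | A ω = false}]
  set ν₁ := μ[|{ω | A ω = true}]
  have h₀ := abs_measureReal_sub_le_integral_abs ν₀ hY hg
  have h₁ := abs_measureReal_sub_le_integral_abs ν₁ hY hg
  have h₂ := abs_sub_le (ν₀.real {ω | Y ω = true}) (ν₀.real {ω | g ω = true})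
    (ν₁.real {ω | Y ω = true})
  have h₃ := abs_sub_le (ν₀.real {ω | g ω = true}) (ν₁.real {ω | g ω = true})
    (ν₁.real {ω | Y ω = true})
  linarith [abs_sub_comm (ν₀.real {ω | g ω = true}) (ν₁.real {ω | g ω = true}),
    abs_sub_comm (ν₁.real {ω | Y ω = true}) (ν₁.real {ω | g ω = true})]

end

lemma sq_sqrt_sub_sqrt_le {a b : ℝ} (hb : 0 ≤ b) (hba : b ≤ a) : (√a - √b) ^ 2 ≤ a - b := by
  nlinarith [Real.sq_sqrt hb, Real.sq_sqrt (hb.trans hba), Real.sqrt_le_sqrt hba,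
    Real.sqrt_nonneg b]

theorem privacy_error_tradeoff_general
    {Ω 𝒳 𝒵 : Type*} [MeasurableSpace Ω] [MeasurableSpace 𝒵]
    [MeasurableSingletonClass 𝒵] [Countable 𝒵]
    (μ : Measure Ω) [IsProbabilityMeasure μ]
    (X : Ω → 𝒳) (Y A : Ω → Bool) (f : 𝒳 → 𝒵)
    (hY : Measurable Y) (hfX : Measurable (fun ω => f (X ω)))
    (hA0 : μ {ω | A ω = false} ≠ 0) (hA1 : μ {ω | A ω = true} ≠ 0)
    (hpriv : 1 - jsFun
          (fun b => (ProbabilityTheory.cond μ {ω | A ω = false}) {ω | Y ω = b})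
          (fun b => (ProbabilityTheory.cond μ {ω | A ω = true}) {ω | Y ω = b})
        ≤ ⨅ g : 𝒵 → Bool, privA μ A (fun ω => g (f (X ω)))) :
    ∀ h : 𝒵 → Bool,
      (1/2) * (Real.sqrt (jsFun
            (fun b => (ProbabilityTheory.cond μ {ω | A ω = false}) {ω | Y ω = b})
            (fun b => (ProbabilityTheory.cond μ {ω | A ω = true}) {ω | Y ω = b}))
          - Real.sqrt (1 - ⨅ g : 𝒵 → Bool, privA μ A (fun ω => g (f (X ω)))))^2
        ≤ errCond μ Y A (fun ω => h (f (X ω))) false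
          + errCond μ Y A (fun ω => h (f (X ω))) true := by
  intro h
  have := cond_isProbabilityMeasure hA0
  have := cond_isProbabilityMeasure hA1
  set J := jsFun (fun b => μ[|{ω | A ω = false}] {ω | Y ω = b})
    (fun b => μ[|{ω | A ω = true}] {ω | Y ω = b})
  set P := ⨅ g : 𝒵 → Bool, privA μ A (fun ω => g (f (X ω)))
  have hP : P ≤ privA μ A (fun ω => h (f (X ω))) :=
    ciInf_le ⟨0, Set.forall_mem_range.2 fun g => privA_nonneg μ A _⟩ h
  have hJ : J ≤ _ := jsFun_law_bool_le_abs_sub hY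
  have hE := abs_sub_le_errCond_add_errCond_add_one_sub_privA μ (A := A)
    (g := fun ω => h (f (X ω))) hY ((measurable_of_countable h).comp hfX)
  have hsq := sq_sqrt_sub_sqrt_le (a := J) (sub_nonneg.2 (hP.trans (privA_le_one μ A _)))
    (by linarith)
  linarith [sq_nonneg (√J - √(1 - P))]

/-- privacy–error trade-off: when `H` consists of all (measurable)
binary classifiers over `𝒵`, if `Priv_A(H∘f) ≥ 1 - D_JS(D₀^Y, D₁^Y)`, then for
every `h ∈ H`,
`Err₀(h∘f) + Err₁(h∘f) ≥ (1/2)(d_JS(D₀^Y, D₁^Y) - √(1 - Priv_A(H∘f)))²`. -/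
theorem privacy_error_tradeoff
    {Ω 𝒳 𝒵 : Type*} [MeasurableSpace Ω] [MeasurableSpace 𝒵]
    [MeasurableSingletonClass 𝒵] [Countable 𝒵]
    (μ : Measure Ω) [IsProbabilityMeasure μ]
    (X : Ω → 𝒳) (Y A : Ω → Bool) (f : 𝒳 → 𝒵)
    (hY : Measurable Y) (hA : Measurable A) (hfX : Measurable (fun ω => f (X ω)))
    (hA0 : μ {ω | A ω = false} ≠ 0) (hA1 : μ {ω | A ω = true} ≠ 0)
    (hpriv : 1 - jsFun
          (fun b => (ProbabilityTheory.cond μ {ω | A ω = false}) {ω | Y ω = b})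
          (fun b => (ProbabilityTheory.cond μ {ω | A ω = true}) {ω | Y ω = b})
        ≤ ⨅ g : 𝒵 → Bool, privA μ A (fun ω => g (f (X ω)))) :
    ∀ h : 𝒵 → Bool,
      (1/2) * (Real.sqrt (jsFun
            (fun b => (ProbabilityTheory.cond μ {ω | A ω = false}) {ω | Y ω = b})
            (fun b => (ProbabilityTheory.cond μ {ω | A ω = true}) {ω | Y ω = b}))
          - Real.sqrt (1 - ⨅ g : 𝒵 → Bool, privA μ A (fun ω => g (f (X ω)))))^2
        ≤ errCond μ Y A (fun ω => h (f (X ω))) false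
          + errCond μ Y A (fun ω => h (f (X ω))) true :=
  privacy_error_tradeoff_general μ X Y A f hY hfX hA0 hA1 hpriv
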